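/- Let S = {v₁, …, vₙ} and let T be the path tree with edges vᵢv_{i+1} for 1 ≤ i < n, rooted at v₁ (so each vᵢ with i < n has the single child v_{i+1}). A Hamiltonian cycle on S conforms to T if and only if it is pyramidal: traversing the cycle starting from v₁ in a suitable direction, the indices of the visited vertices first strictly increase from 1 up to n and then strictly decrease back towards 1. -/

import Mathlib

/-- A rooted tree on a vertex type `V`, given by a parent function under which
every vertex reaches the root. -/
structure ParentTree (V : Type) where
  root : V
  parent : V → V
  parent_root : parent root = root
  reaches_root : ∀ v, ∃ k, parent^[k] v = root

namespace ParentTree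

variable {V : Type}

/-- The set `C(u)` of children of `u`. -/
def children (T : ParentTree V) (u : V) : Set V := {v | T.parent v = u ∧ v ≠ u}

/-- The set `T(u)` of descendants of `u` (including `u` itself). -/
def desc (T : ParentTree V) (u : V) : Set V := {b | ∃ k, T.parent^[k] b = u}

/-- For a set `U` of siblings, `T(U) = ⋃_{u ∈ U} T(u)`. -/
def descU (T : ParentTree V) (U : Set V) : Set V := ⋃ u ∈ U, T.desc u

end ParentTree

/-- The set of points occurring in a list. -/
def listSet {V : Type} (l : List V) : Set V := {x | x ∈ l}

/-- The weight of a Hamiltonian cycle given as a list: the sum of distances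
over cyclically consecutive pairs. -/
def cycleWeight {V X : Type} [MetricSpace X] (f : V → X) (h : List V) : ℝ :=
  ((h.zip (h.rotate 1)).map fun p => dist (f p.1) (f p.2)).sum

/-- A Hamiltonian cycle on the point set: a cyclic ordering of all points,
represented as a duplicate-free list containing every point. -/
def IsHamCycle {V : Type} (h : List V) : Prop := h.Nodup ∧ ∀ x : V, x ∈ h

/-- The set `A` forms a contiguous cyclic arc of the cycle `h`. -/
def IsCyclicArc {V : Type} (A : Set V) (h : List V) : Prop :=
  ∃ i : ℕ, listSet ((h.rotate i).take A.ncard) = A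

/-- A Hamiltonian cycle conforms to the rooted tree `T` if for every node `u`
the set `T(u)` of descendants of `u` forms a contiguous cyclic arc of the cycle. -/
def CycleConforms {V : Type} (T : ParentTree V) (h : List V) : Prop :=
  ∀ u : V, IsCyclicArc (T.desc u) h

/-- A Hamiltonian cycle on `{v₁, …, vₙ}` (indexed by `Fin n`) is pyramidal:
traversing the cycle starting from `v₁` in a suitable direction, the indices
first strictly increase and then strictly decrease. -/
def IsPyramidal {n : ℕ} (h : List (Fin n)) : Prop :=
  ∃ g : List (Fin n), (∃ i : ℕ, g = h.rotate i ∨ g = h.reverse.rotate i) ∧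
    (∃ x : Fin n, g.head? = some x ∧ (x : ℕ) = 0) ∧
    ∃ l₁ l₂ : List (Fin n), g = l₁ ++ l₂ ∧
      l₁.Chain' (· < ·) ∧ l₂.Chain' (fun a b => b < a)


/-! In the path tree the descendants of `vᵢ` are `{vᵢ, …, vₙ}`, so a cycle conforms to it iff
every upper set of indices is a cyclic arc. Cutting the cycle open at `v₁`, which lies in no
proper upper set, this says that every upper set is a contiguous block of the remaining list.
A duplicate-free list with this property is unimodal: its minimum `m` sits at one end, since
`a, …, m, …, c` would split the block of elements `≥ min a c`; removing `m` and inducting gives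
the claim. Conversely, in a unimodal list the elements `≥ u` are the tail of the increasing part
followed by the head of the decreasing part. -/

variable {α : Type}

theorem listSet_reverse (l : List α) : listSet l.reverse = listSet l := by
  ext; simp [listSet]

theorem ncard_listSet {l : List α} (hl : l.Nodup) : (listSet l).ncard = l.length := by
  classical
  have : listSet l = ↑l.toFinset := by ext; simp [listSet]
  rw [this, Set.ncard_coe_finset, List.toFinset_card_of_nodup hl]

theorem List.take_rotate_length_sub (l : List α) (c : ℕ) :
    (l.rotate (l.length - c)).take c = l.drop (l.length - c) := by
  rw [List.rotate_eq_drop_append_take (by omega), List.take_append,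
    List.take_of_length_le (by rw [List.length_drop]; omega), List.append_right_eq_self]
  simp only [List.length_drop, List.take_eq_nil_iff]
  omega

section CyclicArc

variable {A : Set α} {l l' : List α}

theorem IsCyclicArc.of_rotate {k : ℕ} (h : IsCyclicArc A (l.rotate k)) : IsCyclicArc A l := by
  obtain ⟨i, hi⟩ := h
  exact ⟨k + i, by rwa [← List.rotate_rotate]⟩

theorem IsCyclicArc.of_isRotated (hl : l ~r l') (h : IsCyclicArc A l) : IsCyclicArc A l' := by
  obtain ⟨k, rfl⟩ := hl.symm
  exact h.of_rotate

theorem IsCyclicArc.of_reverse (h : IsCyclicArc A l.reverse) : IsCyclicArc A l := by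
  obtain ⟨i, hi⟩ := h
  set m := (l.reverse.rotate i).reverse
  have hm : m ~r l := by
    simpa [m] using (List.IsRotated.symm ⟨i, rfl⟩ : l.reverse.rotate i ~r l.reverse).reverse
  refine IsCyclicArc.of_isRotated hm ⟨m.length - A.ncard, ?_⟩
  -- the first `k` entries of `m.reverse` are, reversed, the last `k` entries of `m`
  rw [List.take_rotate_length_sub, ← listSet_reverse, ← List.take_reverse, List.reverse_reverse]
  exact hi

theorem List.IsInfix.isCyclicArc {s : List α} (hs : s <:+: l) (hl : l.Nodup) :
    IsCyclicArc (listSet s) l := by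
  obtain ⟨p, q, rfl⟩ := hs
  refine ⟨p.length, ?_⟩
  rw [ncard_listSet (List.infix_append p s q |>.nodup hl), List.append_assoc,
    List.rotate_append_length_eq, List.append_assoc, List.take_left]

theorem IsCyclicArc.exists_infix {t : List α} {a : α} (h : IsCyclicArc A (t ++ [a]))
    (ha : a ∉ A) : ∃ s, s <:+: t ∧ listSet s = A := by
  obtain ⟨i, hi⟩ := h
  rw [← List.rotate_mod, List.length_append, List.length_singleton] at hi
  set k := i % (t.length + 1)
  have hk : k ≤ t.length := Nat.lt_succ_iff.mp (Nat.mod_lt _ t.length.succ_pos)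
  rw [List.rotate_eq_drop_append_take (by simpa using hk.trans t.length.le_succ),
    List.drop_append_of_le_length hk, List.take_append_of_le_length hk, List.append_assoc,
    List.singleton_append, List.take_append] at hi
  refine ⟨(t.drop k).take A.ncard, (List.take_prefix _ _).isInfix.trans
    (List.drop_suffix _ _).isInfix, ?_⟩
  -- an arc running past the end of `t.drop k` would contain `a`
  rcases h0 : A.ncard - (t.drop k).length with _ | j
  · rwa [h0, List.take_zero, List.append_nil] at hi
  · rw [h0, List.take_succ_cons] at hi
    exact absurd (hi ▸ List.mem_append_right _ List.mem_cons_self) ha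

end CyclicArc

theorem List.Pairwise.exists_eq_append_of_imp {R : α → α → Prop} {P : α → Prop}
    (hP : ∀ a b, R a b → P a → P b) {l : List α} (hl : l.Pairwise R) :
    ∃ l₁ l₂, l = l₁ ++ l₂ ∧ (∀ x ∈ l₁, ¬P x) ∧ ∀ x ∈ l₂, P x := by
  induction l with
  | nil => exact ⟨[], [], rfl, by simp, by simp⟩
  | cons a l ih =>
    obtain ⟨hal, hl⟩ := List.pairwise_cons.mp hl
    by_cases ha : P a
    · refine ⟨[], a :: l, rfl, by simp, ?_⟩
      simpa [ha] using fun x hx => hP a x (hal x hx) ha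
    · obtain ⟨l₁, l₂, rfl, h₁, h₂⟩ := ih hl
      exact ⟨a :: l₁, l₂, rfl, by simpa [ha] using h₁, h₂⟩

theorem List.Nodup.mem_of_infix {s p q : List α} {a b c : α} (hnd : (p ++ b :: q).Nodup)
    (hs : s <:+: p ++ b :: q) (hap : a ∈ p) (has : a ∈ s) (hcq : c ∈ q) (hcs : c ∈ s) :
    b ∈ s := by
  have hdisj := (List.nodup_append.mp hnd).2.2
  rcases List.infix_append_iff.mp hs with hsp | hsq | ⟨s₁, s₂, rfl, hs₁, hs₂⟩
  · exact absurd rfl (hdisj c (hsp.subset hcs) c (List.mem_cons_of_mem b hcq))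
  · exact absurd rfl (hdisj a hap a (hsq.subset has))
  · rcases List.mem_append.mp hcs with hc₁ | hc₂
    · exact absurd rfl (hdisj c (hs₁.subset hc₁) c (List.mem_cons_of_mem b hcq))
    · rcases List.prefix_cons_iff.mp hs₂ with rfl | ⟨s', rfl, -⟩
      · simp at hc₂
      · exact List.mem_append_right _ List.mem_cons_self

section Unimodal

variable [LinearOrder α]

def IsUnimodal (l : List α) : Prop :=
  ∃ l₁ l₂, l = l₁ ++ l₂ ∧ l₁.IsChain (· < ·) ∧ l₂.IsChain (fun a b => b < a)

def HasContiguousUpperSets (l : List α) : Prop :=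
  ∀ u ∈ l, ∃ s, s <:+: l ∧ listSet s = {x | x ∈ l ∧ u ≤ x}

variable {l : List α}

theorem IsUnimodal.cons {a : α} (h : IsUnimodal l) (ha : ∀ x ∈ l, a < x) :
    IsUnimodal (a :: l) := by
  obtain ⟨l₁, l₂, rfl, h₁, h₂⟩ := h
  refine ⟨a :: l₁, l₂, rfl, List.isChain_cons.mpr ⟨fun y hy => ?_, h₁⟩, h₂⟩
  exact ha y (List.mem_append_left _ (List.mem_of_mem_head? hy))

theorem IsUnimodal.reverse (h : IsUnimodal l) : IsUnimodal l.reverse := by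
  obtain ⟨l₁, l₂, rfl, h₁, h₂⟩ := h
  exact ⟨l₂.reverse, l₁.reverse, List.reverse_append, List.isChain_reverse.mpr h₂,
    List.isChain_reverse.mpr h₁⟩

theorem IsUnimodal.hasContiguousUpperSets (h : IsUnimodal l) : HasContiguousUpperSets l := by
  obtain ⟨l₁, l₂, rfl, h₁, h₂⟩ := h
  intro u _
  obtain ⟨p₁, s₁, rfl, hp₁, hs₁⟩ := (List.isChain_iff_pairwise.mp h₁).exists_eq_append_of_imp
    (P := (u ≤ ·)) fun _ _ hab hua => hua.trans hab.le
  obtain ⟨p₂, s₂, rfl, hp₂, hs₂⟩ := (List.isChain_iff_pairwise.mp h₂).exists_eq_append_of_imp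
    (P := (· < u)) fun _ _ hba hau => hba.trans hau
  refine ⟨s₁ ++ p₂, by simpa using List.infix_append p₁ (s₁ ++ p₂) s₂, ?_⟩
  ext x
  simp only [listSet, List.mem_append, Set.mem_ofPred_eq]
  grind

theorem HasContiguousUpperSets.reverse (h : HasContiguousUpperSets l) :
    HasContiguousUpperSets l.reverse := by
  intro u hu
  obtain ⟨s, hs, hset⟩ := h u (List.mem_reverse.mp hu)
  refine ⟨s.reverse, List.reverse_infix.mpr hs, ?_⟩
  simp only [listSet_reverse, hset, List.mem_reverse]

theorem HasContiguousUpperSets.of_cons {a : α} (h : HasContiguousUpperSets (a :: l))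
    (ha : ∀ x ∈ l, a < x) : HasContiguousUpperSets l := by
  intro u hu
  obtain ⟨s, hs, hset⟩ := h u (List.mem_cons_of_mem a hu)
  have has : a ∉ s := by
    intro has
    have has : a ∈ listSet s := has
    rw [hset] at has
    exact (ha u hu).not_ge has.2
  refine ⟨s, ?_, hset.trans (Set.ext fun x => ?_)⟩
  · rcases List.infix_cons_iff.mp hs with hpre | hinf
    · rcases List.prefix_cons_iff.mp hpre with rfl | ⟨s', rfl, -⟩
      · exact List.nil_infix
      · exact absurd List.mem_cons_self has
    · exact hinf
  · grind

theorem HasContiguousUpperSets.isUnimodal {l : List α} (h : HasContiguousUpperSets l)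
    (hl : l.Nodup) : IsUnimodal l := by
  obtain rfl | ⟨m, hm, hmin⟩ : l = [] ∨ ∃ m ∈ l, ∀ x ∈ l, m ≤ x := by
    cases hmin : l.min? with
    | none => exact .inl (List.min?_eq_none_iff.mp hmin)
    | some m => exact .inr ⟨m, List.min?_eq_some_iff.mp hmin⟩
  · exact ⟨[], [], rfl, .nil, .nil⟩
  obtain ⟨p, q, rfl⟩ := List.append_of_mem hm
  have hlt : ∀ x ∈ p ++ q, m < x := by
    have hm' := (List.nodup_cons.mp (List.nodup_middle.mp hl)).1
    intro x hx
    refine (hmin x ?_).lt_of_ne (by rintro rfl; exact hm' hx)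
    simp only [List.mem_append, List.mem_cons] at hx ⊢
    tauto
  have hpq : p = [] ∨ q = [] := by
    by_contra! ⟨hp, hq⟩
    obtain ⟨a, ha⟩ := List.exists_mem_of_ne_nil p hp
    obtain ⟨c, hc⟩ := List.exists_mem_of_ne_nil q hq
    obtain ⟨s, hs, hset⟩ := h (min a c) (by rcases min_choice a c with h | h <;> simp [h, ha, hc])
    have hmem : ∀ {x}, x ∈ s ↔ x ∈ p ++ m :: q ∧ min a c ≤ x := Set.ext_iff.mp hset _
    have hms := hl.mem_of_infix hs ha (hmem.mpr ⟨by simp [ha], min_le_left a c⟩) hc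
      (hmem.mpr ⟨by simp [hc], min_le_right a c⟩)
    exact (lt_min (hlt a (by simp [ha])) (hlt c (by simp [hc]))).not_ge (hmem.mp hms).2
  rcases hpq with rfl | rfl
  · simp only [List.nil_append] at h hl hlt ⊢
    exact (isUnimodal (h.of_cons hlt) hl.of_cons).cons hlt
  · -- reversal moves `m` to the front
    simp only [List.append_nil] at hlt
    have hrev := h.reverse
    rw [List.reverse_append, List.reverse_cons, List.reverse_nil, List.nil_append,
      List.singleton_append] at hrev
    have hp : ∀ x ∈ p.reverse, m < x := by simpa using hlt
    simpa using ((isUnimodal (hrev.of_cons hp)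
      (List.nodup_reverse.mpr (List.nodup_append.mp hl).1)).cons hp).reverse
termination_by l.length

end Unimodal

theorem IsHamCycle.rotate {l : List α} (hl : IsHamCycle l) (i : ℕ) : IsHamCycle (l.rotate i) :=
  ⟨List.nodup_rotate.mpr hl.1, fun x => List.mem_rotate.mpr (hl.2 x)⟩

theorem IsHamCycle.reverse {l : List α} (hl : IsHamCycle l) : IsHamCycle l.reverse :=
  ⟨List.nodup_reverse.mpr hl.1, fun x => List.mem_reverse.mpr (hl.2 x)⟩

section PathTree

variable {n : ℕ} {T : ParentTree (Fin n)}

theorem ParentTree.val_parent_of_path (hroot : (T.root : ℕ) = 0)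
    (hpar : ∀ i j : Fin n, (j : ℕ) = (i : ℕ) + 1 → T.parent j = i) (v : Fin n) :
    (T.parent v : ℕ) = v - 1 := by
  rcases Nat.eq_zero_or_pos (v : ℕ) with hv | hv
  · rw [show v = T.root from Fin.ext (hv.trans hroot.symm), T.parent_root, hroot]
  · rw [hpar ⟨v - 1, by omega⟩ v (by simp only; omega)]

theorem ParentTree.val_iterate_parent_of_path (hroot : (T.root : ℕ) = 0)
    (hpar : ∀ i j : Fin n, (j : ℕ) = (i : ℕ) + 1 → T.parent j = i) (k : ℕ) (v : Fin n) :
    (T.parent^[k] v : ℕ) = v - k := by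
  induction k with
  | zero => rfl
  | succ k ih => rw [Function.iterate_succ_apply', val_parent_of_path hroot hpar, ih, Nat.sub_sub]

theorem ParentTree.desc_eq_Ici_of_path (hroot : (T.root : ℕ) = 0)
    (hpar : ∀ i j : Fin n, (j : ℕ) = (i : ℕ) + 1 → T.parent j = i) (u : Fin n) :
    T.desc u = Set.Ici u := by
  ext b
  simp only [ParentTree.desc, Set.mem_ofPred_eq, Set.mem_Ici, Fin.le_def, Fin.ext_iff,
    val_iterate_parent_of_path hroot hpar]
  exact ⟨fun ⟨k, hk⟩ => by omega, fun h => ⟨b - u, by omega⟩⟩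

end PathTree

section Pyramidal

variable {n : ℕ} {h : List (Fin n)}

theorem IsHamCycle.isPyramidal (hh : IsHamCycle h) {r : Fin n} (hr : (r : ℕ) = 0)
    (harc : ∀ u, IsCyclicArc (Set.Ici u) h) : IsPyramidal h := by
  obtain ⟨p, t, rfl⟩ := List.append_of_mem (hh.2 r)
  have hrot : p ++ r :: t ~r r :: (t ++ p) := List.isRotated_append
  have hnd : (r :: (t ++ p)).Nodup := hrot.nodup_iff.mp hh.1
  have hr_lt : ∀ x ∈ t ++ p, r < x := fun x hx => by
    have hxr : x ≠ r := fun hxr => (List.nodup_cons.mp hnd).1 (hxr ▸ hx)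
    have := Fin.val_ne_iff.mpr hxr
    rw [Fin.lt_def]
    omega
  have hup : HasContiguousUpperSets (t ++ p) := by
    intro u hu
    obtain ⟨s, hs, hset⟩ := ((harc u).of_isRotated
      (hrot.trans (List.isRotated_concat r _).symm)).exists_infix (hr_lt u hu).not_ge
    refine ⟨s, hs, hset.trans (Set.ext fun x => ⟨fun hx => ⟨?_, hx⟩, fun hx => hx.2⟩)⟩
    have hx' : x ≠ r := ((hr_lt u hu).trans_le hx).ne'
    have hx_mem := hh.2 x
    simp only [List.mem_append, List.mem_cons, hx', false_or] at hx_mem ⊢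
    exact hx_mem.symm
  obtain ⟨i, hi⟩ := hrot
  exact ⟨r :: (t ++ p), ⟨i, .inl hi.symm⟩, ⟨r, rfl, hr⟩, (hup.isUnimodal hnd.of_cons).cons hr_lt⟩

theorem IsPyramidal.isCyclicArc_Ici (hp : IsPyramidal h) (hh : IsHamCycle h) (u : Fin n) :
    IsCyclicArc (Set.Ici u) h := by
  obtain ⟨g, ⟨i, hg⟩, -, hg_uni⟩ := hp
  have hg_ham : IsHamCycle g := by
    rcases hg with rfl | rfl
    exacts [hh.rotate i, hh.reverse.rotate i]
  have hgarc : IsCyclicArc (Set.Ici u) g := by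
    obtain ⟨s, hs, hset⟩ := IsUnimodal.hasContiguousUpperSets hg_uni u (hg_ham.2 u)
    have hIci : {x | x ∈ g ∧ u ≤ x} = Set.Ici u := Set.ext fun x => and_iff_right (hg_ham.2 x)
    rw [← hIci, ← hset]
    exact hs.isCyclicArc hg_ham.1
  rcases hg with rfl | rfl
  exacts [hgarc.of_rotate, hgarc.of_rotate.of_reverse]

end Pyramidal

theorem stmt13_general {n : ℕ}
    (T : ParentTree (Fin n)) (hroot : (T.root : ℕ) = 0)
    (hpar : ∀ i j : Fin n, (j : ℕ) = (i : ℕ) + 1 → T.parent j = i)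
    (h : List (Fin n)) (hh : IsHamCycle h) :
    CycleConforms T h ↔ IsPyramidal h := by
  simp only [CycleConforms, ParentTree.desc_eq_Ici_of_path hroot hpar]
  exact ⟨hh.isPyramidal hroot, fun hp u => hp.isCyclicArc_Ici hh u⟩

/-- For the path tree (each `vᵢ`, `i < n`, has the single child `v_{i+1}`,
rooted at `v₁`), a Hamiltonian cycle conforms to the tree if and only if it is
pyramidal. -/
theorem stmt13 {n : ℕ} {X : Type} [MetricSpace X] (hn : 3 ≤ n)
    (f : Fin n → X) (hf : Function.Injective f)
    (T : ParentTree (Fin n)) (hroot : (T.root : ℕ) = 0)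
    (hpar : ∀ i j : Fin n, (j : ℕ) = (i : ℕ) + 1 → T.parent j = i)
    (h : List (Fin n)) (hh : IsHamCycle h) :
    CycleConforms T h ↔ IsPyramidal h :=
  stmt13_general T hroot hpar h hh
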